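/- Suppose Λ_{P₂}(f₁,f₂,f₃) ≤ C λ^{(d/2)(1-1/p₁-1/p₂-1/p₃)} ‖f₁‖_{p₁}‖f₂‖_{p₂}‖f₃‖_{p₃} holds for all nonnegative f₁,f₂,f₃ on ℤ^d and all sufficiently large admissible λ, and suppose N_λ ≥ c λ^{(d-2)/2} for a constant c > 0. Then necessarily (2/d)(1/p₁ + 1/p₃) + 1/p₂ ≤ 1. -/

import Mathlib

open MeasureTheory ENNReal

noncomputable section

/-- The sphere `{y ∈ ℤ^d : |y|² = λ}`. -/
def sph (d lam : ℕ) : Set (Fin d → ℤ) := {y | (∑ i, (y i) ^ 2) = (lam : ℤ)}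

/-- The indicator function of the sphere `S_λ`. -/
def sphInd (d lam : ℕ) (x : Fin d → ℤ) : ℝ := if (∑ i, (x i) ^ 2) = (lam : ℤ) then 1 else 0

/-- `N_λ`, the number of lattice points on the sphere. -/
def Nlam (d lam : ℕ) : ℕ := (sph d lam).ncard

/-- The discrete spherical averaging operator. -/
def Aavg (d lam : ℕ) (f : (Fin d → ℤ) → ℝ) (x : Fin d → ℤ) : ℝ :=
  ((Nlam d lam : ℝ))⁻¹ * ∑' y, sphInd d lam y * f (x - y)

/-- The trilinear 2-chain form `Λ_{P₂}`, valued in `ℝ≥0∞`. -/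
def ΛP₂e (d lam : ℕ) (f₁ f₂ f₃ : (Fin d → ℤ) → ℝ) : ℝ≥0∞ :=
  (ENNReal.ofReal ((Nlam d lam : ℝ) ^ 2))⁻¹ *
    ∑' x₁, ∑' x₂, ∑' x₃,
      ENNReal.ofReal (f₁ x₁) * ENNReal.ofReal (f₂ x₂) * ENNReal.ofReal (f₃ x₃) *
        ENNReal.ofReal (sphInd d lam (x₁ - x₂)) * ENNReal.ofReal (sphInd d lam (x₂ - x₃))

/-!
With `f₁ = f₃ = 1_{S_λ}` and `f₂ = 1_{{0}}` the form equals `1`, so the bound gives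
`1 ≤ C λ^α N_λ^{1/p₁ + 1/p₃}` whenever `N_λ ≠ 0`, where `α = (d/2)(1 - 1/p₁ - 1/p₂ - 1/p₃)`.
The spheres `S_λ` with `X < λ ≤ 2X` are disjoint and lie in the cube `[-√(2X), √(2X)]^d`, so by
pigeonhole one of them has `N_λ ≲ X^{d/2 - 1}`. Along these `λ` the right-hand side is
`O(λ^δ)` with `δ = (d/2)(1 - 1/p₂) - (1/p₁ + 1/p₃)`, and `δ < 0` exactly when the claimed
inequality fails.
-/

open Filter

def latticeCube (d r : ℕ) : Finset (Fin d → ℤ) :=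
  Fintype.piFinset fun _ => Finset.Icc (-(r : ℤ)) r

lemma card_latticeCube (d r : ℕ) : (latticeCube d r).card = (2 * r + 1) ^ d := by
  simp only [latticeCube, Fintype.card_piFinset, Int.card_Icc, Finset.prod_const,
    Finset.card_univ, Fintype.card_fin]
  congr 1
  omega

lemma sphInd_eq_indicator (d lam : ℕ) : sphInd d lam = (sph d lam).indicator fun _ => 1 := by
  ext x
  simp only [sphInd, Set.indicator_apply, sph, Set.mem_ofPred_eq]

lemma sphInd_nonneg (d lam : ℕ) (x : Fin d → ℤ) : 0 ≤ sphInd d lam x := by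
  rw [sphInd_eq_indicator]
  exact Set.indicator_nonneg (fun _ _ => zero_le_one) x

lemma sphInd_neg (d lam : ℕ) (x : Fin d → ℤ) : sphInd d lam (-x) = sphInd d lam x := by
  simp [sphInd]

lemma ofReal_sphInd (d lam : ℕ) (x : Fin d → ℤ) :
    ENNReal.ofReal (sphInd d lam x) = (sph d lam).indicator 1 x := by
  by_cases hx : x ∈ sph d lam <;> simp [sphInd_eq_indicator, hx]

lemma sph_subset_latticeCube {d lam r : ℕ} (h : Nat.sqrt lam ≤ r) :
    sph d lam ⊆ latticeCube d r := by
  intro y hy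
  simp only [latticeCube, Finset.mem_coe, Fintype.mem_piFinset]
  intro i
  have hsq : (y i).natAbs ^ 2 ≤ lam := by
    have : y i ^ 2 ≤ lam :=
      hy ▸ Finset.single_le_sum (fun j _ => sq_nonneg (y j)) (Finset.mem_univ i)
    zify
    simpa [sq_abs] using this
  have : (y i).natAbs ≤ r := (Nat.le_sqrt'.mpr hsq).trans h
  rw [Finset.mem_Icc, ← abs_le, Int.abs_eq_natAbs]
  exact_mod_cast this

lemma sph_finite (d lam : ℕ) : (sph d lam).Finite :=
  (latticeCube d (Nat.sqrt lam)).finite_toSet.subset (sph_subset_latticeCube le_rfl)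

lemma Nlam_zero_left {lam : ℕ} (hlam : lam ≠ 0) : Nlam 0 lam = 0 := by
  simp [Nlam, sph, eq_comm, hlam]

lemma sph_eq_filter_latticeCube {d lam r : ℕ} (h : Nat.sqrt lam ≤ r) :
    sph d lam = ↑{y ∈ latticeCube d r | (∑ i, y i ^ 2).toNat = lam} := by
  ext y
  have : 0 ≤ ∑ i, y i ^ 2 := Finset.sum_nonneg fun i _ => sq_nonneg (y i)
  simp only [Finset.coe_filter, Set.mem_ofPred_eq]
  constructor
  · intro hy
    exact ⟨sph_subset_latticeCube h hy, by rw [show ∑ i, y i ^ 2 = lam from hy]; simp⟩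
  · rintro ⟨-, hy⟩
    show _ = _
    omega

lemma exists_Nlam_le (d X : ℕ) (hX : 0 < X) :
    ∃ lam ∈ Finset.Ioc X (2 * X),
      (Nlam d lam : ℝ) ≤ (2 * (Nat.sqrt (2 * X) : ℝ) + 1) ^ d / X := by
  have hcard : ((latticeCube d (Nat.sqrt (2 * X))).card : ℝ) ≤
      (Finset.Ioc X (2 * X)).card • (((2 * Nat.sqrt (2 * X) + 1) ^ d : ℕ) / X : ℝ) := by
    rw [card_latticeCube, Nat.card_Ioc, nsmul_eq_mul, show 2 * X - X = X by omega,
      mul_div_cancel₀ _ (by positivity)]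
  obtain ⟨lam, hlam, hle⟩ := Finset.exists_card_fiber_le_of_card_le_nsmul
    (f := fun y => (∑ i, y i ^ 2).toNat) (by simp; omega) hcard
  refine ⟨lam, hlam, ?_⟩
  rw [Nlam, sph_eq_filter_latticeCube (Nat.sqrt_le_sqrt (Finset.mem_Ioc.mp hlam).2),
    Set.ncard_coe_finset]
  exact_mod_cast hle

lemma sq_two_mul_sqrt_add_one_le {n : ℕ} (hn : 0 < n) : (2 * Nat.sqrt n + 1) ^ 2 ≤ 9 * n := by
  have h1 : 0 < Nat.sqrt n := Nat.sqrt_pos.mpr hn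
  have h2 : Nat.sqrt n * Nat.sqrt n ≤ n := Nat.sqrt_le n
  nlinarith

lemma pow_le_rpow_half {x y : ℝ} (hx : 0 ≤ x) (h : x ^ 2 ≤ y) (d : ℕ) :
    x ^ d ≤ y ^ ((d : ℝ) / 2) :=
  calc x ^ d = (x ^ 2) ^ ((d : ℝ) / 2) := by
        rw [← Real.rpow_natCast x 2, ← Real.rpow_mul hx]
        push_cast
        rw [mul_div_cancel₀ _ two_ne_zero, Real.rpow_natCast]
  _ ≤ y ^ ((d : ℝ) / 2) := by gcongr

lemma frequently_Nlam_le (d : ℕ) :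
    ∃ᶠ lam : ℕ in atTop,
      (Nlam d lam : ℝ) ≤ 2 * 18 ^ ((d : ℝ) / 2) * (lam : ℝ) ^ ((d : ℝ) / 2 - 1) := by
  rw [frequently_atTop]
  intro a
  obtain ⟨lam, hlam, hN⟩ := exists_Nlam_le d (a + 1) (by omega)
  obtain ⟨hXlam, hlamX⟩ := Finset.mem_Ioc.mp hlam
  set X := a + 1
  have hX : (0 : ℝ) < X := by positivity
  have hXlam' : (X : ℝ) ≤ lam := by exact_mod_cast hXlam.le
  have hlam : (0 : ℝ) < lam := hX.trans_le hXlam'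
  have hlamX' : (lam : ℝ) / 2 ≤ X := by
    rw [div_le_iff₀ two_pos]
    exact_mod_cast (by omega : lam ≤ X * 2)
  have hcube : (2 * (Nat.sqrt (2 * X) : ℝ) + 1) ^ 2 ≤ 18 * X := by
    exact_mod_cast (sq_two_mul_sqrt_add_one_le (by omega : 0 < 2 * X)).trans_eq (by ring)
  refine ⟨lam, by omega, hN.trans ?_⟩
  calc (2 * (Nat.sqrt (2 * X) : ℝ) + 1) ^ d / X ≤ (18 * X) ^ ((d : ℝ) / 2) / X := by
        gcongr
        exact pow_le_rpow_half (by positivity) hcube d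
  _ ≤ (18 * lam) ^ ((d : ℝ) / 2) / (lam / 2) := by gcongr
  _ = 2 * 18 ^ ((d : ℝ) / 2) * (lam : ℝ) ^ ((d : ℝ) / 2 - 1) := by
        rw [Real.mul_rpow (by norm_num) hlam.le, Real.rpow_sub_one hlam.ne']
        ring

lemma tsum_ofReal_sphInd (d lam : ℕ) :
    ∑' y, ENNReal.ofReal (sphInd d lam y) = Nlam d lam := by
  simp_rw [ofReal_sphInd]
  rw [← tsum_subtype, Pi.one_def, ENNReal.tsum_set_one, ← (sph_finite d lam).cast_ncard_eq]
  rfl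

lemma ΛP₂e_sphInd_indicator_zero {d lam : ℕ} (h : Nlam d lam ≠ 0) :
    ΛP₂e d lam (sphInd d lam) (({0} : Set (Fin d → ℤ)).indicator fun _ => 1) (sphInd d lam) =
      1 := by
  have hterm : ∀ x₁ x₂ x₃ : Fin d → ℤ,
      ENNReal.ofReal (sphInd d lam x₁) *
          ENNReal.ofReal (({0} : Set (Fin d → ℤ)).indicator (fun _ => 1) x₂) *
          ENNReal.ofReal (sphInd d lam x₃) * ENNReal.ofReal (sphInd d lam (x₁ - x₂)) *
          ENNReal.ofReal (sphInd d lam (x₂ - x₃)) =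
        ENNReal.ofReal (sphInd d lam x₁) *
          ((if x₂ = 0 then 1 else 0) * ENNReal.ofReal (sphInd d lam x₃)) := by
    intro x₁ x₂ x₃
    by_cases hx₂ : x₂ = 0
    · subst hx₂
      simp only [zero_sub, sub_zero, sphInd_neg, ofReal_sphInd]
      by_cases h₁ : x₁ ∈ sph d lam <;> by_cases h₃ : x₃ ∈ sph d lam <;> simp [h₁, h₃]
    · simp [hx₂]
  simp_rw [ΛP₂e, hterm, ENNReal.tsum_mul_left, tsum_ofReal_sphInd, ite_mul, one_mul, zero_mul,
    tsum_ite_eq, ENNReal.tsum_mul_right, tsum_ofReal_sphInd]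
  rw [← Nat.cast_pow, ENNReal.ofReal_natCast, Nat.cast_pow, ← sq,
    ENNReal.inv_mul_cancel (by simpa) (by simp)]

lemma eLpNorm_indicator_one_le {α : Type*} [MeasurableSpace α] [MeasurableSingletonClass α]
    {s : Set α} (hs : s.Finite) (p : ℝ≥0∞) :
    eLpNorm (s.indicator fun _ => (1 : ℝ)) p Measure.count ≤
      (s.ncard : ℝ≥0∞) ^ (1 / p).toReal := by
  refine (eLpNorm_indicator_const_le 1 p).trans_eq ?_
  rw [Measure.count_apply_finite _ hs, ← Set.ncard_eq_toFinset_card _ hs, ENNReal.toReal_div]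
  simp

lemma eLpNorm_sphInd_le (d lam : ℕ) (p : ℝ≥0∞) :
    eLpNorm (sphInd d lam) p Measure.count ≤ (Nlam d lam : ℝ≥0∞) ^ (1 / p).toReal := by
  rw [sphInd_eq_indicator]
  exact eLpNorm_indicator_one_le (sph_finite d lam) p

lemma one_le_of_ΛP₂e_sphInd_le {d lam : ℕ} {p₁ p₂ p₃ C : ℝ≥0∞} {α : ℝ} (hC : C ≠ ⊤)
    (hlam : lam ≠ 0) (hN : Nlam d lam ≠ 0)
    (h : ΛP₂e d lam (sphInd d lam) (({0} : Set (Fin d → ℤ)).indicator fun _ => (1 : ℝ))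
        (sphInd d lam) ≤
      C * (lam : ℝ≥0∞) ^ α * eLpNorm (sphInd d lam) p₁ Measure.count *
        eLpNorm (({0} : Set (Fin d → ℤ)).indicator fun _ => (1 : ℝ)) p₂ Measure.count *
        eLpNorm (sphInd d lam) p₃ Measure.count) :
    1 ≤ C.toReal * (lam : ℝ) ^ α * (Nlam d lam : ℝ) ^ ((1 / p₁).toReal + (1 / p₃).toReal) := by
  have hle : 1 ≤ C * (lam : ℝ≥0∞) ^ α * (Nlam d lam : ℝ≥0∞) ^ (1 / p₁).toReal * 1 *
      (Nlam d lam : ℝ≥0∞) ^ (1 / p₃).toReal := by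
    refine (ΛP₂e_sphInd_indicator_zero hN).symm.le.trans (h.trans ?_)
    gcongr
    · exact eLpNorm_sphInd_le d lam p₁
    · exact (eLpNorm_indicator_one_le (Set.finite_singleton 0) p₂).trans (by simp)
    · exact eLpNorm_sphInd_le d lam p₃
  have hlam₀ : (0 : ℝ) < lam := by positivity
  have hN₀ : (0 : ℝ) < Nlam d lam := by positivity
  rwa [mul_one, ← ENNReal.ofReal_toReal hC, ← ENNReal.ofReal_natCast lam,
    ← ENNReal.ofReal_natCast (Nlam d lam), ENNReal.ofReal_rpow_of_pos hlam₀,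
    ENNReal.ofReal_rpow_of_pos hN₀, ENNReal.ofReal_rpow_of_pos hN₀,
    ← ENNReal.ofReal_mul (by positivity), ← ENNReal.ofReal_mul (by positivity),
    ← ENNReal.ofReal_mul (by positivity), mul_assoc _ (_ ^ _), ← Real.rpow_add hN₀,
    ENNReal.one_le_ofReal] at hle

lemma rpow_mul_rpow_le_of_le_mul_rpow {x y K e α b : ℝ} (hx : 0 < x) (hy : 0 ≤ y) (hK : 0 ≤ K)
    (hb : 0 ≤ b) (h : y ≤ K * x ^ e) : x ^ α * y ^ b ≤ K ^ b * x ^ (α + e * b) :=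
  calc x ^ α * y ^ b ≤ x ^ α * (K * x ^ e) ^ b := by gcongr
  _ = K ^ b * x ^ (α + e * b) := by
      rw [Real.mul_rpow hK (by positivity), ← Real.rpow_mul hx.le, Real.rpow_add hx]
      ring

lemma exponent_neg_of_lt_two_div_mul_add {d b₁ b₂ b₃ : ℝ} (hd : 0 < d)
    (h : 1 < 2 / d * (b₁ + b₃) + b₂) :
    d / 2 * (1 - b₁ - b₂ - b₃) + (d / 2 - 1) * (b₁ + b₃) < 0 := by
  have := mul_lt_mul_of_pos_left h (half_pos hd)
  rw [mul_add, ← mul_assoc, div_mul_div_cancel₀ two_ne_zero, div_self hd.ne', one_mul] at this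
  linarith

lemma eventually_mul_rpow_lt_one (M : ℝ) {δ : ℝ} (hδ : δ < 0) :
    ∀ᶠ n : ℕ in atTop, M * (n : ℝ) ^ δ < 1 := by
  have := ((tendsto_rpow_neg_atTop (neg_pos.mpr hδ)).comp tendsto_natCast_atTop_atTop).const_mul M
  simp only [neg_neg, mul_zero] at this
  exact this.eventually (gt_mem_nhds one_pos)

theorem lambdaP2_necessary_condition_general (d : ℕ) (p₁ p₂ p₃ : ℝ≥0∞)
    (C : ℝ≥0∞) (hC : C ≠ ⊤) (c : ℝ) (hc : 0 < c) (lam₀ : ℕ)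
    (hN : ∀ lam ≥ lam₀, c * (lam : ℝ) ^ (((d : ℝ) - 2) / 2) ≤ (Nlam d lam : ℝ))
    (hbound : ∀ lam ≥ lam₀, ∀ f₁ f₂ f₃ : (Fin d → ℤ) → ℝ,
      (∀ x, 0 ≤ f₁ x) → (∀ x, 0 ≤ f₂ x) → (∀ x, 0 ≤ f₃ x) →
      ΛP₂e d lam f₁ f₂ f₃ ≤
        C * (lam : ℝ≥0∞) ^
            (((d : ℝ) / 2) * (1 - (1 / p₁).toReal - (1 / p₂).toReal - (1 / p₃).toReal)) *
          eLpNorm f₁ p₁ Measure.count * eLpNorm f₂ p₂ Measure.count *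
          eLpNorm f₃ p₃ Measure.count) :
    (2 / (d : ℝ)) * ((1 / p₁).toReal + (1 / p₃).toReal) + (1 / p₂).toReal ≤ 1 := by
  have hpos : ∀ᶠ lam : ℕ in atTop, lam ≠ 0 ∧ Nlam d lam ≠ 0 := by
    filter_upwards [eventually_ge_atTop lam₀, eventually_gt_atTop 0] with lam h₀ h₁
    exact ⟨h₁.ne', by exact_mod_cast ((mul_pos hc (by positivity)).trans_le (hN lam h₀)).ne'⟩
  have hd : d ≠ 0 := by
    rintro rfl
    obtain ⟨lam, hlam, hN₀⟩ := hpos.exists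
    exact hN₀ (Nlam_zero_left hlam)
  by_contra! hcon
  set b := (1 / p₁).toReal + (1 / p₃).toReal
  set α := (d : ℝ) / 2 * (1 - (1 / p₁).toReal - (1 / p₂).toReal - (1 / p₃).toReal)
  set K : ℝ := 2 * 18 ^ ((d : ℝ) / 2)
  have hlower : ∀ᶠ lam : ℕ in atTop, 1 ≤ C.toReal * (lam : ℝ) ^ α * (Nlam d lam : ℝ) ^ b := by
    filter_upwards [hpos, eventually_ge_atTop lam₀] with lam ⟨hlam, hN₀⟩ h₀
    exact one_le_of_ΛP₂e_sphInd_le hC hlam hN₀ (hbound lam h₀ _ _ _ (sphInd_nonneg d lam)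
      (Set.indicator_nonneg fun _ _ => zero_le_one) (sphInd_nonneg d lam))
  have hupper := eventually_mul_rpow_lt_one (C.toReal * K ^ b)
    (exponent_neg_of_lt_two_div_mul_add (Nat.cast_pos.mpr (Nat.pos_of_ne_zero hd)) hcon)
  obtain ⟨lam, ⟨⟨⟨hlam, -⟩, h₁⟩, hNle⟩, h₂⟩ :=
    (((hpos.and hlower).and_frequently (frequently_Nlam_le d)).and_eventually hupper).exists
  refine h₂.not_ge (h₁.trans ?_)
  rw [mul_assoc, mul_assoc]
  exact mul_le_mul_of_nonneg_left (rpow_mul_rpow_le_of_le_mul_rpow (by positivity)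
    (by positivity) (by positivity) (by positivity) hNle) ENNReal.toReal_nonneg

/-- a necessary condition for the sharp-exponent `ℓ^p` improving bound
for the 2-chain form. -/
theorem lambdaP2_necessary_condition (d : ℕ) (p₁ p₂ p₃ : ℝ≥0∞)
    (hp₁ : 1 ≤ p₁) (hp₂ : 1 ≤ p₂) (hp₃ : 1 ≤ p₃)
    (C : ℝ≥0∞) (hC : C ≠ ⊤) (c : ℝ) (hc : 0 < c) (lam₀ : ℕ)
    (hN : ∀ lam ≥ lam₀, c * (lam : ℝ) ^ (((d : ℝ) - 2) / 2) ≤ (Nlam d lam : ℝ))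
    (hbound : ∀ lam ≥ lam₀, ∀ f₁ f₂ f₃ : (Fin d → ℤ) → ℝ,
      (∀ x, 0 ≤ f₁ x) → (∀ x, 0 ≤ f₂ x) → (∀ x, 0 ≤ f₃ x) →
      ΛP₂e d lam f₁ f₂ f₃ ≤
        C * (lam : ℝ≥0∞) ^
            (((d : ℝ) / 2) * (1 - (1 / p₁).toReal - (1 / p₂).toReal - (1 / p₃).toReal)) *
          eLpNorm f₁ p₁ Measure.count * eLpNorm f₂ p₂ Measure.count *
          eLpNorm f₃ p₃ Measure.count) :
    (2 / (d : ℝ)) * ((1 / p₁).toReal + (1 / p₃).toReal) + (1 / p₂).toReal ≤ 1 :=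
  lambdaP2_necessary_condition_general d p₁ p₂ p₃ C hC c hc lam₀ hN hbound
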